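/- For every natural number k ≥ 1 there exists a natural number m_k with 2^{k-1} ≤ m_k < 2^k such that the L^1 norm of the Dirichlet–Walsh kernel satisfies ∫_0^1 |D_{m_k}(x)| dx ≥ (1/4)·log_2(m_k). -/

import Mathlib

open MeasureTheory Filter Finset

/-!
Write `L m = ∫_{[0,1)} |D_m|`. Splitting off the lowest bit gives
`D_{2a}(x) = (1 + r_0(x)) D_a(2x)` and
`D_{4a+1}(x) = (1 + r_0(x)) (1 + r_0(2x)) D_a(4x) + W_a(4x)`.
The first kernel vanishes on `[1/2, 1)`, so a change of variables gives `L(2a) = L a`.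
The second one has modulus `1` on `[1/4, 1)` and modulus at least `4 |D_a(4x)| - 1` on `[0, 1/4)`,
so `L(4a+1) ≥ L a + 1/2`. Along `1, 2, 5, 10, 21, …` (binary `1010…`), where two more bits
multiply `m` by about `4`, the integral therefore grows by `1/2`, i.e. by a quarter of `log₂ m`.
-/

/-- The 1-periodic base Rademacher function: `1` on `[0,1/2)`, `-1` on `[1/2,1)`. -/
noncomputable def r0 (x : ℝ) : ℝ := if Int.fract x < 1/2 then 1 else -1

/-- The `k`-th Rademacher function `r_k(x) = r_0(2^k x)`. -/
noncomputable def rad (k : ℕ) (x : ℝ) : ℝ := r0 (2 ^ k * x)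

/-- The Walsh–Paley function `W_n`: product of the Rademacher functions `r_k`
over the bits `k` appearing in the binary expansion of `n`. -/
noncomputable def walsh (n : ℕ) (x : ℝ) : ℝ :=
  ∏ k ∈ Finset.range n, if n.testBit k then rad k x else 1

/-- The Dirichlet–Walsh kernel `D_m(x) = ∑_{i=0}^{m-1} W_i(x)`. -/
noncomputable def walshDirichlet (m : ℕ) (x : ℝ) : ℝ :=
  ∑ i ∈ Finset.range m, walsh i x

lemma abs_r0 (x : ℝ) : |r0 x| = 1 := by
  unfold r0; split <;> simp

lemma r0_of_lt_half {x : ℝ} (h₀ : 0 ≤ x) (h : x < 1/2) : r0 x = 1 := by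
  rw [r0, Int.fract_eq_self.mpr ⟨h₀, by linarith⟩, if_pos h]

lemma r0_of_half_le {x : ℝ} (h₀ : 1/2 ≤ x) (h : x < 1) : r0 x = -1 := by
  rw [r0, Int.fract_eq_self.mpr ⟨by linarith, h⟩, if_neg (not_lt.mpr h₀)]

lemma measurable_r0 : Measurable r0 :=
  Measurable.ite (measurableSet_lt measurable_fract measurable_const)
    measurable_const measurable_const

lemma measurable_rad (k : ℕ) : Measurable (rad k) :=
  measurable_r0.comp (measurable_const_mul _)

lemma rad_zero : rad 0 = r0 := by
  ext x; simp [rad]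

lemma rad_succ (k : ℕ) (x : ℝ) : rad (k + 1) x = rad k (2 * x) := by
  rw [rad, rad, pow_succ, mul_assoc]

lemma measurable_walsh (n : ℕ) : Measurable (walsh n) :=
  Finset.measurable_prod _ fun k _ => by
    split
    · exact measurable_rad k
    · exact measurable_const

lemma abs_walsh (n : ℕ) (x : ℝ) : |walsh n x| = 1 := by
  rw [walsh, Finset.abs_prod]
  refine Finset.prod_eq_one fun k _ => ?_
  split
  · exact abs_r0 _
  · exact abs_one

lemma walsh_eq_prod_range {n N : ℕ} (h : n ≤ N) (x : ℝ) :
    walsh n x = ∏ k ∈ Finset.range N, if n.testBit k then rad k x else 1 := by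
  refine Finset.prod_subset (Finset.range_subset_range.mpr h) fun k _ hk => ?_
  have hnk : n < 2 ^ k :=
    (Nat.lt_two_pow_self).trans_le (Nat.pow_le_pow_right two_pos (not_lt.mp (mem_range.not.mp hk)))
  rw [Nat.testBit_eq_false_of_lt hnk, if_neg Bool.false_ne_true]

lemma walsh_two_mul (a : ℕ) (x : ℝ) : walsh (2 * a) x = walsh a (2 * x) := by
  rw [walsh_eq_prod_range (N := 2 * a + 1) (by omega), walsh_eq_prod_range (N := 2 * a) (by omega),
    Finset.prod_range_succ', Nat.testBit_zero, if_neg (by simp), mul_one]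
  refine Finset.prod_congr rfl fun k _ => ?_
  rw [Nat.testBit_succ, Nat.mul_div_cancel_left a two_pos, rad_succ]

lemma walsh_two_mul_add_one (a : ℕ) (x : ℝ) :
    walsh (2 * a + 1) x = r0 x * walsh a (2 * x) := by
  rw [walsh_eq_prod_range (N := 2 * a + 2) (by omega),
    walsh_eq_prod_range (N := 2 * a + 1) (by omega),
    Finset.prod_range_succ', Nat.testBit_zero, if_pos (by simp), rad_zero, mul_comm]
  congr 1
  refine Finset.prod_congr rfl fun k _ => ?_
  rw [Nat.testBit_succ, show (2 * a + 1) / 2 = a by omega, rad_succ]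

lemma walshDirichlet_succ (m : ℕ) (x : ℝ) :
    walshDirichlet (m + 1) x = walshDirichlet m x + walsh m x :=
  Finset.sum_range_succ _ _

lemma measurable_walshDirichlet (m : ℕ) : Measurable (walshDirichlet m) :=
  Finset.measurable_sum _ fun i _ => measurable_walsh i

lemma abs_walshDirichlet_le (m : ℕ) (x : ℝ) : |walshDirichlet m x| ≤ m :=
  (Finset.abs_sum_le_sum_abs _ _).trans_eq (by simp [abs_walsh])

lemma walshDirichlet_two_mul (a : ℕ) (x : ℝ) :
    walshDirichlet (2 * a) x = (1 + r0 x) * walshDirichlet a (2 * x) := by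
  induction a with
  | zero => simp [walshDirichlet]
  | succ a ih =>
    rw [show 2 * (a + 1) = 2 * a + 1 + 1 by ring, walshDirichlet_succ, walshDirichlet_succ, ih,
      walshDirichlet_succ, walsh_two_mul, walsh_two_mul_add_one]
    ring

lemma walshDirichlet_four_mul_add_one (a : ℕ) (x : ℝ) :
    walshDirichlet (4 * a + 1) x
      = (1 + r0 x) * (1 + r0 (2 * x)) * walshDirichlet a (4 * x) + walsh a (4 * x) := by
  rw [walshDirichlet_succ, show 4 * a = 2 * (2 * a) by ring, walshDirichlet_two_mul,
    walshDirichlet_two_mul, walsh_two_mul, walsh_two_mul, show 2 * (2 * x) = 4 * x by ring]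
  ring

lemma walshDirichlet_two_mul_of_half_le (a : ℕ) {x : ℝ} (hx : x ∈ Set.Ico (2⁻¹ : ℝ) 1) :
    walshDirichlet (2 * a) x = 0 := by
  rw [walshDirichlet_two_mul, r0_of_half_le (by linarith [hx.1]) hx.2, add_neg_cancel, zero_mul]

lemma walshDirichlet_two_mul_of_lt_half (a : ℕ) {x : ℝ} (hx : x ∈ Set.Ico (0 : ℝ) 2⁻¹) :
    walshDirichlet (2 * a) x = 2 * walshDirichlet a (2 * x) := by
  rw [walshDirichlet_two_mul, r0_of_lt_half hx.1 (by linarith [hx.2]), one_add_one_eq_two]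

/-- On `[1/4, 1)` one of the factors `1 + r_0(x)`, `1 + r_0(2x)` vanishes, leaving `W_a(4x)`. -/
lemma abs_walshDirichlet_four_mul_add_one_of_quarter_le (a : ℕ) {x : ℝ}
    (hx : x ∈ Set.Ico (4⁻¹ : ℝ) 1) : |walshDirichlet (4 * a + 1) x| = 1 := by
  rw [walshDirichlet_four_mul_add_one]
  rcases lt_or_ge x (1/2) with h | h
  · rw [r0_of_half_le (x := 2 * x) (by linarith [hx.1]) (by linarith)]
    simp [abs_walsh]
  · rw [r0_of_half_le h hx.2]
    simp [abs_walsh]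

lemma walshDirichlet_four_mul_add_one_of_lt_quarter (a : ℕ) {x : ℝ}
    (hx : x ∈ Set.Ico (0 : ℝ) 4⁻¹) :
    walshDirichlet (4 * a + 1) x = 4 * walshDirichlet a (4 * x) + walsh a (4 * x) := by
  rw [walshDirichlet_four_mul_add_one, r0_of_lt_half hx.1 (by linarith [hx.2]),
    r0_of_lt_half (x := 2 * x) (by linarith [hx.1]) (by linarith [hx.2])]
  norm_num

lemma integrableOn_abs_walshDirichlet_comp_mul (m : ℕ) (c : ℝ) {s : Set ℝ}
    (hs : volume s ≠ ⊤) : IntegrableOn (fun x => |walshDirichlet m (c * x)|) s :=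
  Measure.integrableOn_of_bounded hs
    ((measurable_walshDirichlet m).comp (measurable_const_mul c)).abs.aestronglyMeasurable
    (ae_of_all _ fun x => by simpa using abs_walshDirichlet_le m (c * x))

lemma integrableOn_abs_walshDirichlet (m : ℕ) {s : Set ℝ} (hs : volume s ≠ ⊤) :
    IntegrableOn (fun x => |walshDirichlet m x|) s := by
  simpa using integrableOn_abs_walshDirichlet_comp_mul m 1 hs

lemma setIntegral_Ico_zero_inv_comp_mul (f : ℝ → ℝ) {c : ℝ} (hc : 0 < c) :
    ∫ x in Set.Ico 0 c⁻¹, f (c * x) = c⁻¹ * ∫ x in Set.Ico (0 : ℝ) 1, f x := by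
  rw [integral_Ico_eq_integral_Ioo, integral_Ico_eq_integral_Ioo,
    ← integral_Ioc_eq_integral_Ioo, ← integral_Ioc_eq_integral_Ioo,
    ← intervalIntegral.integral_of_le (inv_nonneg.mpr hc.le),
    ← intervalIntegral.integral_of_le zero_le_one,
    intervalIntegral.integral_comp_mul_left f hc.ne', mul_zero, mul_inv_cancel₀ hc.ne',
    smul_eq_mul]

lemma setIntegral_Ico_split {f : ℝ → ℝ} {a b c : ℝ} (hab : a ≤ b) (hbc : b ≤ c)
    (hf : IntegrableOn f (Set.Ico a c)) :
    ∫ x in Set.Ico a c, f x = (∫ x in Set.Ico a b, f x) + ∫ x in Set.Ico b c, f x := by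
  rw [← Set.Ico_union_Ico_eq_Ico hab hbc] at hf ⊢
  exact setIntegral_union Set.Ico_disjoint_Ico_same measurableSet_Ico
    (hf.mono_set Set.subset_union_left) (hf.mono_set Set.subset_union_right)

noncomputable def walshLebesgueConst (m : ℕ) : ℝ :=
  ∫ x in Set.Ico (0 : ℝ) 1, |walshDirichlet m x|

lemma walshLebesgueConst_one : walshLebesgueConst 1 = 1 := by
  simp [walshLebesgueConst, walshDirichlet, walsh]

lemma walshLebesgueConst_two_mul (a : ℕ) : walshLebesgueConst (2 * a) = walshLebesgueConst a := by
  have hlow : ∫ x in Set.Ico (0 : ℝ) 2⁻¹, |walshDirichlet (2 * a) x|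
      = ∫ x in Set.Ico (0 : ℝ) 2⁻¹, 2 * |walshDirichlet a (2 * x)| :=
    setIntegral_congr_fun measurableSet_Ico fun x hx => by
      rw [walshDirichlet_two_mul_of_lt_half a hx, abs_mul, abs_two]
  have hhigh : ∫ x in Set.Ico (2⁻¹ : ℝ) 1, |walshDirichlet (2 * a) x| = 0 :=
    setIntegral_eq_zero_of_forall_eq_zero fun x hx => by
      rw [walshDirichlet_two_mul_of_half_le a hx, abs_zero]
  rw [walshLebesgueConst, setIntegral_Ico_split (b := 2⁻¹) (by norm_num) (by norm_num)
      (integrableOn_abs_walshDirichlet _ measure_Ico_lt_top.ne), hlow, hhigh, integral_const_mul,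
    setIntegral_Ico_zero_inv_comp_mul (fun x => |walshDirichlet a x|) two_pos, walshLebesgueConst]
  ring

lemma walshLebesgueConst_four_mul_add_one (a : ℕ) :
    walshLebesgueConst a + 1/2 ≤ walshLebesgueConst (4 * a + 1) := by
  have hInt : IntegrableOn (fun x => |walshDirichlet a (4 * x)|) (Set.Ico 0 4⁻¹) :=
    integrableOn_abs_walshDirichlet_comp_mul a 4 measure_Ico_lt_top.ne
  have hlow : ∫ x in Set.Ico (0 : ℝ) 4⁻¹, (4 * |walshDirichlet a (4 * x)| - 1)
      ≤ ∫ x in Set.Ico (0 : ℝ) 4⁻¹, |walshDirichlet (4 * a + 1) x| := by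
    refine setIntegral_mono_on ((hInt.const_mul 4).sub (integrableOn_const measure_Ico_lt_top.ne))
      (integrableOn_abs_walshDirichlet _ measure_Ico_lt_top.ne) measurableSet_Ico fun x hx => ?_
    rw [walshDirichlet_four_mul_add_one_of_lt_quarter a hx]
    have htri := abs_sub_abs_le_abs_sub (4 * walshDirichlet a (4 * x)) (-walsh a (4 * x))
    rw [abs_neg, abs_walsh, abs_mul, abs_of_pos four_pos, sub_neg_eq_add] at htri
    linarith
  have hhigh : ∫ x in Set.Ico (4⁻¹ : ℝ) 1, |walshDirichlet (4 * a + 1) x| = 3/4 := by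
    rw [setIntegral_congr_fun (g := fun _ => (1 : ℝ)) measurableSet_Ico fun x hx =>
        abs_walshDirichlet_four_mul_add_one_of_quarter_le a hx,
      setIntegral_const, Real.volume_real_Ico_of_le (by norm_num), smul_eq_mul, mul_one]
    norm_num
  rw [integral_sub (hInt.const_mul 4) (integrableOn_const measure_Ico_lt_top.ne),
    integral_const_mul,
    setIntegral_Ico_zero_inv_comp_mul (fun x => |walshDirichlet a x|) four_pos, setIntegral_const,
    Real.volume_real_Ico_of_le (by norm_num), smul_eq_mul, mul_one] at hlow
  rw [walshLebesgueConst, walshLebesgueConst, setIntegral_Ico_split (b := 4⁻¹) (by norm_num)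
    (by norm_num) (integrableOn_abs_walshDirichlet (4 * a + 1) measure_Ico_lt_top.ne), hhigh]
  linarith

/-- `1, 10, 101, 1010, …` in binary: the `n + 1` bit number with alternating bits. -/
def alternatingBits : ℕ → ℕ
  | 0 => 1
  | 1 => 2
  | n + 2 => 4 * alternatingBits n + 1

lemma two_pow_le_alternatingBits (n : ℕ) : 2 ^ n ≤ alternatingBits n := by
  induction n using Nat.twoStepInduction with
  | zero => rfl
  | one => rfl
  | more n ih _ => rw [alternatingBits, show 2 ^ (n + 2) = 4 * 2 ^ n by ring]; omega

lemma alternatingBits_lt_two_pow (n : ℕ) : alternatingBits n < 2 ^ (n + 1) := by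
  induction n using Nat.twoStepInduction with
  | zero => decide
  | one => decide
  | more n ih _ => rw [alternatingBits, show 2 ^ (n + 2 + 1) = 4 * 2 ^ (n + 1) by ring]; omega

lemma walshLebesgueConst_alternatingBits (n : ℕ) :
    (n + 1 : ℝ) / 4 ≤ walshLebesgueConst (alternatingBits n) := by
  induction n using Nat.twoStepInduction with
  | zero => norm_num [alternatingBits, walshLebesgueConst_one]
  | one =>
    have hL2 := walshLebesgueConst_two_mul 1
    rw [mul_one, walshLebesgueConst_one] at hL2
    norm_num [alternatingBits, hL2]
  | more n ih _ =>
    rw [alternatingBits]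
    have hstep := walshLebesgueConst_four_mul_add_one (alternatingBits n)
    push_cast
    linarith

/-- For every `k ≥ 1` there exists `m_k` with `2^{k-1} ≤ m_k < 2^k` such that
`∫_0^1 |D_{m_k}(x)| dx ≥ (1/4) · log₂ m_k`. -/
theorem exists_walshDirichlet_L1_large (k : ℕ) (hk : 1 ≤ k) :
    ∃ m : ℕ, 2 ^ (k - 1) ≤ m ∧ m < 2 ^ k ∧
      (1 / 4) * Real.logb 2 m ≤ ∫ x in Set.Ico (0:ℝ) 1, |walshDirichlet m x| := by
  obtain ⟨n, rfl⟩ : ∃ n, k = n + 1 := ⟨k - 1, by omega⟩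
  have hlt := alternatingBits_lt_two_pow n
  have hpos : (0 : ℝ) < alternatingBits n := by
    exact_mod_cast (Nat.one_le_two_pow).trans (two_pow_le_alternatingBits n)
  have hlog : Real.logb 2 (alternatingBits n) ≤ n + 1 := by
    rw [Real.logb_le_iff_le_rpow one_lt_two hpos, ← Nat.cast_succ, Real.rpow_natCast]
    exact_mod_cast hlt.le
  refine ⟨alternatingBits n, two_pow_le_alternatingBits n, hlt, ?_⟩
  change _ ≤ walshLebesgueConst _
  linarith [walshLebesgueConst_alternatingBits n]
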